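/- For any three-qubit mixed state ρ, the convex-roof extended GME measure E_m(ρ) = inf over pure-state decompositions of Σ p_i E_m(|ψ_i⟩) satisfies E_m(ρ) ≥ √2(|⟨001|ρ|100⟩| + |⟨001|ρ|010⟩| + |⟨100|ρ|010⟩|) − (√2/2)(⟨010|ρ|010⟩ + ⟨100|ρ|100⟩ + ⟨001|ρ|001⟩) − √2(√(⟨101|ρ|101⟩⟨000|ρ|000⟩) + √(⟨110|ρ|110⟩⟨000|ρ|000⟩) + √(⟨011|ρ|011⟩⟨000|ρ|000⟩)). -/

import Mathlib

open Finset

abbrev Idx3 : Type := Fin 2 × Fin 2 × Fin 2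

/-- Reduced density matrix of the first qubit of a pure three-qubit state. -/
noncomputable def rho1 (c : Idx3 → ℂ) : Matrix (Fin 2) (Fin 2) ℂ :=
  fun i i' => ∑ j : Fin 2, ∑ k : Fin 2, c (i, j, k) * (starRingEnd ℂ) (c (i', j, k))

/-- Reduced density matrix of the second qubit. -/
noncomputable def rho2 (c : Idx3 → ℂ) : Matrix (Fin 2) (Fin 2) ℂ :=
  fun j j' => ∑ i : Fin 2, ∑ k : Fin 2, c (i, j, k) * (starRingEnd ℂ) (c (i, j', k))

/-- Reduced density matrix of the third qubit. -/
noncomputable def rho3 (c : Idx3 → ℂ) : Matrix (Fin 2) (Fin 2) ℂ :=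
  fun k k' => ∑ i : Fin 2, ∑ j : Fin 2, c (i, j, k) * (starRingEnd ℂ) (c (i, j, k'))

/-- `√(S_L(ρ))` for a one-qubit reduced matrix `ρ`. -/
noncomputable def sqrtSL (ρ : Matrix (Fin 2) (Fin 2) ℂ) : ℝ :=
  Real.sqrt (2 * (1 - (Matrix.trace (ρ * ρ)).re))

/-- GME measure of a pure three-qubit state: min over the three bipartitions. -/
noncomputable def EmPure (c : Idx3 → ℂ) : ℝ :=
  min (min (sqrtSL (rho1 c)) (sqrtSL (rho2 c))) (sqrtSL (rho3 c))

/-- The set of ensemble averages `Σ_i p_i E_m(|ψ_i⟩)` over all finite pure-state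
decompositions `ρ = Σ_i p_i |ψ_i⟩⟨ψ_i|` of `ρ`. -/
def roofSet (ρ : Matrix Idx3 Idx3 ℂ) : Set ℝ :=
  {x | ∃ (m : ℕ) (p : Fin m → ℝ) (c : Fin m → Idx3 → ℂ),
    (∀ i, 0 ≤ p i) ∧ (∑ i, p i = 1) ∧
    (∀ i, ∑ η : Idx3, Complex.normSq (c i η) = 1) ∧
    (∀ η₁ η₂ : Idx3, ρ η₁ η₂ = ∑ i, (p i : ℂ) * c i η₁ * (starRingEnd ℂ) (c i η₂)) ∧
    x = ∑ i, p i * EmPure (c i)}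

/-!
For a pure state with amplitudes `c`, `2(1 - Tr ρ₁²)` is four times the sum of the squared
`2 × 2` minors `c₀ⱼₖ c₁ⱼ'ₖ' - c₁ⱼₖ c₀ⱼ'ₖ'` (Lagrange's identity), and each minor has modulus at
least `|c_a||c_b| - |c_d||c_e|`. Keeping two minors per bipartition and using
`2|c_a||c_b| ≤ |c_a|² + |c_b|²`, `E_m(ψ)` is bounded below by the witness evaluated at
`x a b = |c_a||c_b|`. The witness is linear in `x`, so averaging over an ensemble evaluates it at
`X a b = Σᵢ pᵢ |cᵢₐ||cᵢ_b|`. Finally `|ρ_ab| ≤ X a b`, `X a a = ρ_aa` and, by Cauchy–Schwarz,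
`X a b ≤ √(ρ_aa ρ_bb)`, and the witness increases in the entries of its first group and
decreases in those of its last.
-/

lemma sum_mul_mul_le_sqrt_mul {ι : Type*} (s : Finset ι) {p u v : ι → ℝ}
    (hp : ∀ i ∈ s, 0 ≤ p i) :
    ∑ i ∈ s, p i * (u i * v i) ≤ √((∑ i ∈ s, p i * u i ^ 2) * ∑ i ∈ s, p i * v i ^ 2) :=
  Real.le_sqrt_of_sq_le <| sum_sq_le_sum_mul_sum_of_sq_le_mul s
    (fun i hi => mul_nonneg (hp i hi) (sq_nonneg _))
    (fun i hi => mul_nonneg (hp i hi) (sq_nonneg _))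
    (fun i _ => le_of_eq (by ring))

lemma sqrt_two_mul_add_le_sqrt {x y r : ℝ} (hx : 0 ≤ x) (hy : 0 ≤ y) (hr : 0 ≤ r) :
    √2 * (x + y) ≤ √(4 * (x ^ 2 + y ^ 2) + r) := by
  rw [← Real.sqrt_sq (by positivity : 0 ≤ √2 * (x + y))]
  refine Real.sqrt_le_sqrt ?_
  nlinarith [sq_nonneg (x - y), Real.sq_sqrt (zero_le_two : (0 : ℝ) ≤ 2)]

lemma norm_mul_sub_norm_mul_le {𝕜 : Type*} [NormedDivisionRing 𝕜] (a b d e : 𝕜) :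
    ‖a‖ * ‖b‖ - ‖d‖ * ‖e‖ ≤ ‖a * b - d * e‖ := by
  simpa only [norm_mul] using norm_sub_norm_le (a * b) (d * e)

lemma two_mul_one_sub_re_trace_rho1_mul_self (c : Idx3 → ℂ)
    (h : ∑ η : Idx3, Complex.normSq (c η) = 1) :
    2 * (1 - (Matrix.trace (rho1 c * rho1 c)).re) =
      4 * (‖c (0,0,0) * c (1,0,1) - c (1,0,0) * c (0,0,1)‖ ^ 2
        + ‖c (0,0,0) * c (1,1,0) - c (1,0,0) * c (0,1,0)‖ ^ 2)
      + 4 * (‖c (0,0,0) * c (1,1,1) - c (1,0,0) * c (0,1,1)‖ ^ 2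
        + ‖c (0,0,1) * c (1,1,0) - c (1,0,1) * c (0,1,0)‖ ^ 2
        + ‖c (0,0,1) * c (1,1,1) - c (1,0,1) * c (0,1,1)‖ ^ 2
        + ‖c (0,1,0) * c (1,1,1) - c (1,1,0) * c (0,1,1)‖ ^ 2) := by
  have h2 : (∑ η : Idx3, Complex.normSq (c η)) ^ 2 = 1 := by rw [h]; ring
  simp only [Fintype.sum_prod_type, Fin.sum_univ_two, Complex.normSq_apply] at h2
  simp only [Complex.sq_norm, Complex.normSq_apply, Matrix.trace, Matrix.mul_apply, rho1,
    Fin.sum_univ_two, Matrix.diag_apply, Complex.add_re, Complex.mul_re, Complex.mul_im,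
    Complex.sub_re, Complex.sub_im, Complex.conj_re, Complex.conj_im, Complex.add_im]
  linear_combination (-2 : ℝ) * h2

lemma sqrtSL_rho1_ge (c : Idx3 → ℂ) (h : ∑ η : Idx3, Complex.normSq (c η) = 1) :
    √2 * ((‖c (1,0,0)‖ * ‖c (0,0,1)‖ - ‖c (0,0,0)‖ * ‖c (1,0,1)‖)
      + (‖c (1,0,0)‖ * ‖c (0,1,0)‖ - ‖c (0,0,0)‖ * ‖c (1,1,0)‖)) ≤ sqrtSL (rho1 c) := by
  have hM₁ := norm_mul_sub_norm_mul_le (c (1,0,0)) (c (0,0,1)) (c (0,0,0)) (c (1,0,1))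
  have hM₂ := norm_mul_sub_norm_mul_le (c (1,0,0)) (c (0,1,0)) (c (0,0,0)) (c (1,1,0))
  rw [norm_sub_rev] at hM₁ hM₂
  calc _ ≤ √2 * (‖c (0,0,0) * c (1,0,1) - c (1,0,0) * c (0,0,1)‖
        + ‖c (0,0,0) * c (1,1,0) - c (1,0,0) * c (0,1,0)‖) := by gcongr
    _ ≤ sqrtSL (rho1 c) := by
      rw [sqrtSL, two_mul_one_sub_re_trace_rho1_mul_self c h]
      exact sqrt_two_mul_add_le_sqrt (norm_nonneg _) (norm_nonneg _) (by positivity)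

lemma sum_normSq_swap (c : Idx3 → ℂ) :
    ∑ η : Idx3, Complex.normSq (c (η.2.1, η.1, η.2.2)) = ∑ η : Idx3, Complex.normSq (c η) := by
  simp only [Fintype.sum_prod_type, Fin.sum_univ_two]; ring

lemma sum_normSq_cycle (c : Idx3 → ℂ) :
    ∑ η : Idx3, Complex.normSq (c (η.2.1, η.2.2, η.1)) = ∑ η : Idx3, Complex.normSq (c η) := by
  simp only [Fintype.sum_prod_type, Fin.sum_univ_two]; ring

-- `rho2` and `rho3` are `rho1` of the state with its qubits permuted, definitionally.
lemma sqrtSL_rho2_ge (c : Idx3 → ℂ) (h : ∑ η : Idx3, Complex.normSq (c η) = 1) :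
    √2 * ((‖c (0,1,0)‖ * ‖c (0,0,1)‖ - ‖c (0,0,0)‖ * ‖c (0,1,1)‖)
      + (‖c (0,1,0)‖ * ‖c (1,0,0)‖ - ‖c (0,0,0)‖ * ‖c (1,1,0)‖)) ≤ sqrtSL (rho2 c) :=
  sqrtSL_rho1_ge (fun η => c (η.2.1, η.1, η.2.2)) ((sum_normSq_swap c).trans h)

lemma sqrtSL_rho3_ge (c : Idx3 → ℂ) (h : ∑ η : Idx3, Complex.normSq (c η) = 1) :
    √2 * ((‖c (0,0,1)‖ * ‖c (0,1,0)‖ - ‖c (0,0,0)‖ * ‖c (0,1,1)‖)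
      + (‖c (0,0,1)‖ * ‖c (1,0,0)‖ - ‖c (0,0,0)‖ * ‖c (1,0,1)‖)) ≤ sqrtSL (rho3 c) :=
  sqrtSL_rho1_ge (fun η => c (η.2.1, η.2.2, η.1)) ((sum_normSq_cycle c).trans h)

/-- The witness of the theorem as a function of the table `x a b`, which stands for
`|⟨a|ρ|b⟩|`, `⟨a|ρ|a⟩` or `√(⟨a|ρ|a⟩⟨b|ρ|b⟩)` according to the group the term belongs to. -/
noncomputable def gmeWitness (x : Idx3 → Idx3 → ℝ) : ℝ :=
  √2 * (x (0,0,1) (1,0,0) + x (0,0,1) (0,1,0) + x (1,0,0) (0,1,0))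
    - √2 / 2 * (x (0,1,0) (0,1,0) + x (1,0,0) (1,0,0) + x (0,0,1) (0,0,1))
    - √2 * (x (1,0,1) (0,0,0) + x (1,1,0) (0,0,0) + x (0,1,1) (0,0,0))

lemma gmeWitness_sum {ι : Type*} (s : Finset ι) (p : ι → ℝ) (x : ι → Idx3 → Idx3 → ℝ) :
    gmeWitness (fun a b => ∑ i ∈ s, p i * x i a b) = ∑ i ∈ s, p i * gmeWitness (x i) := by
  simp only [gmeWitness, ← Finset.sum_add_distrib, Finset.mul_sum, ← Finset.sum_sub_distrib]
  exact Finset.sum_congr rfl fun i _ => by ring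

lemma gmeWitness_le_EmPure (c : Idx3 → ℂ) (h : ∑ η : Idx3, Complex.normSq (c η) = 1) :
    gmeWitness (fun a b => ‖c a‖ * ‖c b‖) ≤ EmPure c := by
  have h₁ := sqrtSL_rho1_ge c h
  have h₂ := sqrtSL_rho2_ge c h
  have h₃ := sqrtSL_rho3_ge c h
  have hs := Real.sqrt_nonneg 2
  have hD := norm_nonneg (c (0,0,0))
  unfold EmPure gmeWitness
  refine le_min (le_min ?_ ?_) ?_
  · nlinarith [mul_nonneg hs (sq_nonneg (‖c (0,0,1)‖ - ‖c (0,1,0)‖)),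
      mul_nonneg hs (sq_nonneg ‖c (1,0,0)‖),
      mul_nonneg hs (mul_nonneg (norm_nonneg (c (0,1,1))) hD)]
  · nlinarith [mul_nonneg hs (sq_nonneg (‖c (0,0,1)‖ - ‖c (1,0,0)‖)),
      mul_nonneg hs (sq_nonneg ‖c (0,1,0)‖),
      mul_nonneg hs (mul_nonneg (norm_nonneg (c (1,0,1))) hD)]
  · nlinarith [mul_nonneg hs (sq_nonneg (‖c (1,0,0)‖ - ‖c (0,1,0)‖)),
      mul_nonneg hs (sq_nonneg ‖c (0,0,1)‖),
      mul_nonneg hs (mul_nonneg (norm_nonneg (c (1,1,0))) hD)]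

def IsDecomposition {ι κ : Type*} [Fintype κ] (ρ : Matrix ι ι ℂ) (p : κ → ℝ) (c : κ → ι → ℂ) :
    Prop :=
  ∀ a b, ρ a b = ∑ i, (p i : ℂ) * c i a * (starRingEnd ℂ) (c i b)

namespace IsDecomposition

variable {ι κ : Type*} [Fintype κ] {ρ : Matrix ι ι ℂ} {p : κ → ℝ} {c : κ → ι → ℂ}

lemma norm_apply_le (hρ : IsDecomposition ρ p c) (hp : ∀ i, 0 ≤ p i) (a b : ι) :
    ‖ρ a b‖ ≤ ∑ i, p i * (‖c i a‖ * ‖c i b‖) := by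
  rw [hρ a b]
  refine (norm_sum_le _ _).trans_eq (Finset.sum_congr rfl fun i _ => ?_)
  rw [norm_mul, norm_mul, Complex.norm_conj, Complex.norm_real, Real.norm_of_nonneg (hp i),
    mul_assoc]

lemma re_apply_self (hρ : IsDecomposition ρ p c) (a : ι) :
    (ρ a a).re = ∑ i, p i * (‖c i a‖ * ‖c i a‖) := by
  rw [hρ a a, Complex.re_sum]
  refine Finset.sum_congr rfl fun i _ => ?_
  rw [mul_assoc, Complex.mul_conj, ← Complex.ofReal_mul, Complex.ofReal_re,
    Complex.normSq_eq_norm_sq, sq]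

lemma sum_le_sqrt_re_mul_re (hρ : IsDecomposition ρ p c) (hp : ∀ i, 0 ≤ p i) (a b : ι) :
    ∑ i, p i * (‖c i a‖ * ‖c i b‖) ≤ √((ρ a a).re * (ρ b b).re) := by
  simpa only [hρ.re_apply_self, sq] using sum_mul_mul_le_sqrt_mul Finset.univ fun i _ => hp i

end IsDecomposition

/-- For any three-qubit mixed state `ρ`, the convex-roof GME measure
`E_m(ρ) = inf Σ_i p_i E_m(|ψ_i⟩)` is bounded below by the nonlinear witness built from
density matrix elements of `ρ`. -/
theorem Em_mixed_lower_bound (ρ : Matrix Idx3 Idx3 ℂ) (hne : (roofSet ρ).Nonempty) :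
    sInf (roofSet ρ) ≥
      Real.sqrt 2 * (‖ρ (0,0,1) (1,0,0)‖ + ‖ρ (0,0,1) (0,1,0)‖ +
          ‖ρ (1,0,0) (0,1,0)‖)
      - (Real.sqrt 2 / 2) * ((ρ (0,1,0) (0,1,0)).re + (ρ (1,0,0) (1,0,0)).re +
          (ρ (0,0,1) (0,0,1)).re)
      - Real.sqrt 2 * (Real.sqrt ((ρ (1,0,1) (1,0,1)).re * (ρ (0,0,0) (0,0,0)).re) +
          Real.sqrt ((ρ (1,1,0) (1,1,0)).re * (ρ (0,0,0) (0,0,0)).re) +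
          Real.sqrt ((ρ (0,1,1) (0,1,1)).re * (ρ (0,0,0) (0,0,0)).re)) := by
  refine le_csInf hne ?_
  rintro _ ⟨_, p, c, hp, -, hnorm, hρ, rfl⟩
  have hdec : IsDecomposition ρ p c := hρ
  calc _ ≤ gmeWitness (fun a b => ∑ i, p i * (‖c i a‖ * ‖c i b‖)) := by
        rw [hdec.re_apply_self (0,1,0), hdec.re_apply_self (1,0,0), hdec.re_apply_self (0,0,1),
          gmeWitness]
        gcongr <;> first
          | exact hdec.norm_apply_le hp _ _
          | exact hdec.sum_le_sqrt_re_mul_re hp _ _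
    _ = ∑ i, p i * gmeWitness (fun a b => ‖c i a‖ * ‖c i b‖) := gmeWitness_sum _ _ _
    _ ≤ ∑ i, p i * EmPure (c i) := Finset.sum_le_sum fun i _ =>
        mul_le_mul_of_nonneg_left (gmeWitness_le_EmPure (c i) (hnorm i)) (hp i)
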